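/- In the n-dimensional army-of-one unaimed system, if the conserved quantity K = x₁X₁(0) - (n-1)·∑_{i=2}^n xᵢXᵢ(0) is negative and all initial data are positive, then X₁(t) → 0 as t → +∞, and every Xⱼ(t) with j ≥ 2 converges to a strictly positive limit. -/

import Mathlib

/-!
Along the flow, `x₁ X₁ - (n - 1) ∑ᵢ xᵢ Xᵢ` is conserved. Each equation is linear in its own
unknown, `f' = a f`, so `f t = f 0 * exp (∫₀ᵗ a)`; in particular `X₁ > 0`, and then `K < 0` forces
`∑ᵢ xᵢ Xᵢ ≥ -K / (n - 1) > 0`. Hence `X₁` decays at least like `exp (-εt)`, so it is integrable on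
`(0, ∞)`, and `Xⱼ = Xⱼ(0) exp (-(x₁ / (n - 1)) ∫₀ᵗ X₁)` converges to a positive limit.
-/

open Filter Topology Set MeasureTheory Real

theorem eq_of_hasDerivAt_zero_Ici {f : ℝ → ℝ} {a : ℝ} (hf : ∀ t ∈ Ici a, HasDerivAt f 0 t)
    {t : ℝ} (ht : a ≤ t) : f t = f a :=
  constant_of_has_deriv_right_zero (fun s hs => (hf s hs.1).continuousAt.continuousWithinAt)
    (fun s hs => (hf s hs.1).hasDerivWithinAt) t ⟨ht, le_rfl⟩

section LinearODE

variable {f a : ℝ → ℝ}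

theorem eq_mul_exp_integral_of_hasDerivAt_mul (ha : ContinuousOn a (Ici 0))
    (hf : ∀ t ∈ Ici 0, HasDerivAt f (a t * f t) t) {t : ℝ} (ht : 0 ≤ t) :
    f t = f 0 * exp (∫ s in 0..t, a s) := by
  -- `a` is extended continuously to all of `ℝ` so that its primitive is differentiable at `0`
  set a' : ℝ → ℝ := fun s => a (max s 0)
  have ha' : Continuous a' :=
    ha.comp_continuous (continuous_id.max continuous_const) fun s => le_max_right s 0
  set F : ℝ → ℝ := fun u => ∫ s in 0..u, a' s
  have hF : ∀ u, HasDerivAt F (a' u) u := fun u =>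
    (ha'.integral_hasStrictDerivAt 0 u).hasDerivAt
  have hconst : ∀ u ∈ Ici (0 : ℝ), HasDerivAt (fun v => f v * exp (-F v)) 0 u := by
    intro u hu
    refine ((hf u hu).mul (hF u).neg.exp).congr_deriv ?_
    rw [show a' u = a u from congrArg a (max_eq_left hu)]
    ring
  have hFt : F t = ∫ s in 0..t, a s :=
    intervalIntegral.integral_congr fun s hs => by
      simp only [a', max_eq_left (uIcc_of_le ht ▸ hs).1]
  have key := eq_of_hasDerivAt_zero_Ici hconst ht
  simp only [F, intervalIntegral.integral_same, neg_zero, exp_zero, mul_one] at key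
  rw [← key, ← hFt, mul_assoc, ← exp_add, neg_add_cancel, exp_zero, mul_one]

theorem pos_of_hasDerivAt_mul (ha : ContinuousOn a (Ici 0))
    (hf : ∀ t ∈ Ici 0, HasDerivAt f (a t * f t) t) (hf0 : 0 < f 0) {t : ℝ} (ht : 0 ≤ t) :
    0 < f t := by
  rw [eq_mul_exp_integral_of_hasDerivAt_mul ha hf ht]
  positivity

variable {ε : ℝ}

theorem abs_le_mul_exp_neg_of_hasDerivAt_mul (ha : ContinuousOn a (Ici 0))
    (hf : ∀ t ∈ Ici 0, HasDerivAt f (a t * f t) t) (haε : ∀ t ∈ Ici 0, a t ≤ -ε)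
    {t : ℝ} (ht : 0 ≤ t) : |f t| ≤ |f 0| * exp (-ε * t) := by
  have hint : ∫ s in 0..t, a s ≤ -ε * t :=
    calc ∫ s in 0..t, a s ≤ ∫ _ in 0..t, -ε :=
          intervalIntegral.integral_mono_on ht
            ((ha.mono Icc_subset_Ici_self).intervalIntegrable_of_Icc ht)
            intervalIntegrable_const fun s hs => haε s hs.1
      _ = -ε * t := by simp [mul_comm]
  rw [eq_mul_exp_integral_of_hasDerivAt_mul ha hf ht, abs_mul, abs_exp]
  gcongr

theorem tendsto_zero_of_hasDerivAt_mul (ha : ContinuousOn a (Ici 0))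
    (hf : ∀ t ∈ Ici 0, HasDerivAt f (a t * f t) t) (hε : 0 < ε) (haε : ∀ t ∈ Ici 0, a t ≤ -ε) :
    Tendsto f atTop (𝓝 0) := by
  have hexp : Tendsto (fun t => |f 0| * exp (-ε * t)) atTop (𝓝 0) := by
    simpa using (tendsto_exp_atBot.comp
      (tendsto_id.const_mul_atTop_of_neg (neg_neg_iff_pos.2 hε))).const_mul |f 0|
  refine squeeze_zero_norm' ?_ hexp
  filter_upwards [eventually_ge_atTop 0] with t ht
  exact abs_le_mul_exp_neg_of_hasDerivAt_mul ha hf haε ht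

theorem integrableOn_Ioi_of_hasDerivAt_mul (ha : ContinuousOn a (Ici 0))
    (hf : ∀ t ∈ Ici 0, HasDerivAt f (a t * f t) t) (hε : 0 < ε) (haε : ∀ t ∈ Ici 0, a t ≤ -ε) :
    IntegrableOn f (Ioi 0) := by
  refine integrable_of_isBigO_exp_neg hε (fun t ht => (hf t ht).continuousAt.continuousWithinAt) ?_
  refine Asymptotics.IsBigO.of_bound |f 0| ?_
  filter_upwards [eventually_ge_atTop 0] with t ht
  simpa [abs_of_pos (exp_pos _)] using abs_le_mul_exp_neg_of_hasDerivAt_mul ha hf haε ht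

theorem tendsto_mul_exp_integral_of_hasDerivAt_mul (ha : ContinuousOn a (Ici 0))
    (hf : ∀ t ∈ Ici 0, HasDerivAt f (a t * f t) t) (hai : IntegrableOn a (Ioi 0)) :
    Tendsto f atTop (𝓝 (f 0 * exp (∫ t in Ioi 0, a t))) := by
  have hlim := ((continuous_exp.const_mul (f 0)).tendsto _).comp
    (intervalIntegral_tendsto_integral_Ioi 0 hai tendsto_id)
  refine hlim.congr' ?_
  filter_upwards [eventually_ge_atTop 0] with t ht
  exact (eq_mul_exp_integral_of_hasDerivAt_mul ha hf ht).symm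

end LinearODE

theorem armyOfOne_conserved {n : ℕ} (hn : 2 ≤ n) {x : ℕ → ℝ} {X : ℕ → ℝ → ℝ}
    (hX₁ : ∀ t : ℝ, 0 ≤ t → HasDerivAt (X 1)
      ((-(∑ i ∈ Finset.Icc 2 n, x i * X i t)) * X 1 t) t)
    (hXj : ∀ j, 2 ≤ j → j ≤ n → ∀ t : ℝ, 0 ≤ t →
      HasDerivAt (X j) (-(x 1 / ((n : ℝ) - 1)) * X 1 t * X j t) t)
    {t : ℝ} (ht : 0 ≤ t) :
    x 1 * X 1 t - ((n : ℝ) - 1) * ∑ i ∈ Finset.Icc 2 n, x i * X i t =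
      x 1 * X 1 0 - ((n : ℝ) - 1) * ∑ i ∈ Finset.Icc 2 n, x i * X i 0 := by
  have hn1 : (n : ℝ) - 1 ≠ 0 := by
    have : (2 : ℝ) ≤ n := by exact_mod_cast hn
    linarith
  refine eq_of_hasDerivAt_zero_Ici (f := fun t =>
    x 1 * X 1 t - ((n : ℝ) - 1) * ∑ i ∈ Finset.Icc 2 n, x i * X i t) (fun s hs => ?_) ht
  have hsum := HasDerivAt.fun_sum fun i (hi : i ∈ Finset.Icc 2 n) =>
    (hXj i (Finset.mem_Icc.1 hi).1 (Finset.mem_Icc.1 hi).2 s hs).const_mul (x i)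
  refine (((hX₁ s hs).const_mul (x 1)).sub (hsum.const_mul ((n : ℝ) - 1))).congr_deriv ?_
  have hterm : ∀ i, ((n : ℝ) - 1) * (x i * (-(x 1 / ((n : ℝ) - 1)) * X 1 s * X i s)) =
      -(x 1 * X 1 s) * (x i * X i s) := fun i => by
    field_simp
  rw [Finset.mul_sum]
  simp only [hterm, ← Finset.mul_sum]
  ring

theorem lanchester_army_of_one_X1_loses (n : ℕ) (hn : 2 ≤ n)
    (x : ℕ → ℝ) (X : ℕ → ℝ → ℝ)
    (hx : ∀ i, 1 ≤ i → i ≤ n → 0 < x i)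
    (hX0 : ∀ i, 1 ≤ i → i ≤ n → 0 < X i 0)
    (hX₁ : ∀ t : ℝ, 0 ≤ t → HasDerivAt (X 1)
      ((-(∑ i ∈ Finset.Icc 2 n, x i * X i t)) * X 1 t) t)
    (hXj : ∀ j, 2 ≤ j → j ≤ n → ∀ t : ℝ, 0 ≤ t →
      HasDerivAt (X j) (-(x 1 / ((n : ℝ) - 1)) * X 1 t * X j t) t)
    (hK : x 1 * X 1 0 - ((n : ℝ) - 1) * ∑ i ∈ Finset.Icc 2 n, x i * X i 0 < 0) :
    Tendsto (X 1) atTop (𝓝 0) ∧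
    ∀ j, 2 ≤ j → j ≤ n → ∃ L : ℝ, 0 < L ∧ Tendsto (X j) atTop (𝓝 L) := by
  have hn1 : (0 : ℝ) < n - 1 := by
    have : (2 : ℝ) ≤ n := by exact_mod_cast hn
    linarith
  set S : ℝ → ℝ := fun t => ∑ i ∈ Finset.Icc 2 n, x i * X i t
  have hS : ContinuousOn (fun t => -S t) (Ici 0) := ContinuousOn.neg <|
    continuousOn_finsetSum _ fun i hi => continuousOn_const.mul fun t ht =>
      (hXj i (Finset.mem_Icc.1 hi).1 (Finset.mem_Icc.1 hi).2 t ht).continuousAt.continuousWithinAt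
  have hX1_pos : ∀ t, 0 ≤ t → 0 < X 1 t :=
    fun t => pos_of_hasDerivAt_mul hS hX₁ (hX0 1 le_rfl (by omega))
  set ε : ℝ := -(x 1 * X 1 0 - ((n : ℝ) - 1) * S 0) / (n - 1)
  have hε : 0 < ε := div_pos (neg_pos.2 hK) hn1
  have hSε : ∀ t ∈ Ici 0, -S t ≤ -ε := by
    intro t ht
    have hcons := armyOfOne_conserved hn hX₁ hXj ht
    have hX1 := mul_pos (hx 1 le_rfl (by omega)) (hX1_pos t ht)
    rw [neg_le_neg_iff, div_le_iff₀ hn1]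
    linarith
  have hX1_int := integrableOn_Ioi_of_hasDerivAt_mul hS hX₁ hε hSε
  have hX1_cont : ContinuousOn (X 1) (Ici 0) := fun t ht =>
    (hX₁ t ht).continuousAt.continuousWithinAt
  refine ⟨tendsto_zero_of_hasDerivAt_mul hS hX₁ hε hSε, fun j hj2 hjn => ⟨_, ?_,
    tendsto_mul_exp_integral_of_hasDerivAt_mul (continuousOn_const.mul hX1_cont) (hXj j hj2 hjn)
      (hX1_int.const_mul _)⟩⟩
  exact mul_pos (hX0 j (by omega) hjn) (exp_pos _)
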